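/- arXiv:1804.05688 — 6 statements merged into one kernel-verified Lean document; each statement's English description precedes it below -/
import Mathlib

section
/- Let U ⊆ ℂ^n be open and connected, let ω_1,…,ω_n : U → M_n(ℂ), let G : U → M_n(ℂ) be differentiable with G(u) invertible for every u ∈ U and ∂G/∂u_j = ω_j G on U for every j, and let A : U → M_n(ℂ) be differentiable with ∂A/∂u_j = [ω_j, A] on U for every j. Then the map u ↦ G(u)^{-1} A(u) G(u) is constant on U. -/
open Matrix

/-- Partial derivative in the `j`-th coordinate direction of a matrix-valued function
of `u ∈ ℂ^N`, computed entrywise. -/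
noncomputable def mpdv {N n : ℕ} (j : Fin N) (A : (Fin N → ℂ) → Matrix (Fin n) (Fin n) ℂ)
    (u : Fin N → ℂ) : Matrix (Fin n) (Fin n) ℂ :=
  Matrix.of fun a b => fderiv ℂ (fun v => A v a b) u (Pi.single j 1)

private lemma diffAt_finset_prod {ι : Type*} {m : ℕ} (f : ι → (Fin m → ℂ) → ℂ)
    (x : Fin m → ℂ) : ∀ s : Finset ι, (∀ i ∈ s, DifferentiableAt ℂ (f i) x) →
    DifferentiableAt ℂ (fun v => ∏ i ∈ s, f i v) x := by
  classical
  intro s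
  induction s using Finset.induction_on with
  | empty => intro _; simpa using differentiableAt_const (1 : ℂ)
  | insert _ _ ha ih =>
    intro h
    simp only [Finset.prod_insert ha]
    exact (h _ (Finset.mem_insert_self _ _)).mul
      (ih fun i hi => h i (Finset.mem_insert_of_mem hi))

private lemma diffAt_det {m k : ℕ} (M : (Fin m → ℂ) → Matrix (Fin k) (Fin k) ℂ)
    (x : Fin m → ℂ) (h : ∀ a b, DifferentiableAt ℂ (fun v => M v a b) x) :
    DifferentiableAt ℂ (fun v => (M v).det) x := by
  simp only [Matrix.det_apply']
  exact DifferentiableAt.fun_sum fun σ _ =>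
    ((diffAt_finset_prod (fun i v => M v (σ i) i) x Finset.univ fun i _ => h _ _).const_mul _)

private lemma diffAt_entry_mul {m k : ℕ} (X Y : (Fin m → ℂ) → Matrix (Fin k) (Fin k) ℂ)
    (x : Fin m → ℂ) (hX : ∀ a b, DifferentiableAt ℂ (fun v => X v a b) x)
    (hY : ∀ a b, DifferentiableAt ℂ (fun v => Y v a b) x) (a b : Fin k) :
    DifferentiableAt ℂ (fun v => (X v * Y v) a b) x := by
  simp only [Matrix.mul_apply]
  exact DifferentiableAt.fun_sum fun c _ => (hX a c).mul (hY c b)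

private lemma diffAt_inv_entry {m k : ℕ} (X : (Fin m → ℂ) → Matrix (Fin k) (Fin k) ℂ)
    (x : Fin m → ℂ) (hX : ∀ a b, DifferentiableAt ℂ (fun v => X v a b) x)
    (hdet : (X x).det ≠ 0) (a b : Fin k) :
    DifferentiableAt ℂ (fun v => (X v)⁻¹ a b) x := by
  have hrw : (fun v => (X v)⁻¹ a b) = fun v => ((X v).det)⁻¹ * (X v).adjugate a b := by
    funext v
    rw [Matrix.inv_def]
    simp [Ring.inverse_eq_inv']
  rw [hrw]
  have hadj : DifferentiableAt ℂ (fun v => (X v).adjugate a b) x := by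
    simp only [Matrix.adjugate_apply]
    refine diffAt_det (fun v => (X v).updateRow b (Pi.single a 1)) x (fun c d => ?_)
    by_cases hc : c = b
    · subst hc
      simp only [Matrix.updateRow_self]
      exact differentiableAt_const _
    · simp only [Matrix.updateRow_ne hc]
      exact hX c d
  exact ((diffAt_det X x hX).inv hdet).mul hadj

private lemma mpdv_mul {m k : ℕ} (j : Fin m) (X Y : (Fin m → ℂ) → Matrix (Fin k) (Fin k) ℂ)
    (u : Fin m → ℂ) (hX : ∀ a b, DifferentiableAt ℂ (fun v => X v a b) u)
    (hY : ∀ a b, DifferentiableAt ℂ (fun v => Y v a b) u) :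
    mpdv j (fun v => X v * Y v) u = mpdv j X u * Y u + X u * mpdv j Y u := by
  ext a b
  simp only [mpdv, Matrix.of_apply, Matrix.add_apply, Matrix.mul_apply]
  rw [fderiv_fun_sum (A := fun c v => X v a c * Y v c b) (fun c _ => (hX a c).mul (hY c b))]
  simp only [ContinuousLinearMap.coe_sum', Finset.sum_apply]
  rw [← Finset.sum_add_distrib]
  refine Finset.sum_congr rfl fun c _ => ?_
  rw [fderiv_fun_mul (hX a c) (hY c b)]
  simp only [ContinuousLinearMap.add_apply, ContinuousLinearMap.smul_apply, smul_eq_mul]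
  ring

private lemma clm_zero_of_basis {m : ℕ} (L : (Fin m → ℂ) →L[ℂ] ℂ)
    (h : ∀ j, L (Pi.single j 1) = 0) (v : Fin m → ℂ) : L v = 0 := by
  have hv : v = ∑ j, v j • (Pi.single j 1 : Fin m → ℂ) := by
    funext i
    simp [Finset.sum_apply, Pi.single_apply]
  rw [hv, map_sum]
  simp [h]

/-- Core of Proposition 2.3: if `G` is an invertible differentiable solution of
`∂G/∂u_j = ω_j G` and `A` satisfies the Lax-type system `∂A/∂u_j = [ω_j, A]` on an open
connected `U ⊆ ℂ^n`, then `G⁻¹ A G` is constant on `U`. -/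
theorem stmt2 {n : ℕ} (U : Set (Fin n → ℂ)) (hU : IsOpen U) (hconn : IsPreconnected U)
    (ω : Fin n → (Fin n → ℂ) → Matrix (Fin n) (Fin n) ℂ)
    (G A : (Fin n → ℂ) → Matrix (Fin n) (Fin n) ℂ)
    (hG : ∀ a b, DifferentiableOn ℂ (fun u => G u a b) U)
    (hGinv : ∀ u ∈ U, IsUnit (G u))
    (hGeq : ∀ j : Fin n, ∀ u ∈ U, mpdv j G u = ω j u * G u)
    (hA : ∀ a b, DifferentiableOn ℂ (fun u => A u a b) U)
    (hAeq : ∀ j : Fin n, ∀ u ∈ U, mpdv j A u = ω j u * A u - A u * ω j u) :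
    ∀ u ∈ U, ∀ v ∈ U, (G u)⁻¹ * A u * G u = (G v)⁻¹ * A v * G v := by
  classical
  set F : (Fin n → ℂ) → Matrix (Fin n) (Fin n) ℂ := fun v => (G v)⁻¹ * A v * G v with hFdef
  have hGd : ∀ u ∈ U, ∀ a b, DifferentiableAt ℂ (fun v => G v a b) u :=
    fun u hu a b => (hG a b).differentiableAt (hU.mem_nhds hu)
  have hAd : ∀ u ∈ U, ∀ a b, DifferentiableAt ℂ (fun v => A v a b) u :=
    fun u hu a b => (hA a b).differentiableAt (hU.mem_nhds hu)
  have hdet : ∀ u ∈ U, IsUnit (G u).det :=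
    fun u hu => (Matrix.isUnit_iff_isUnit_det _).mp (hGinv u hu)
  have hBd : ∀ u ∈ U, ∀ a b, DifferentiableAt ℂ (fun v => (G v)⁻¹ a b) u :=
    fun u hu a b => diffAt_inv_entry G u (hGd u hu) (hdet u hu).ne_zero a b
  have hFd : ∀ u ∈ U, ∀ a b, DifferentiableAt ℂ (fun v => F v a b) u := fun u hu a b =>
    diffAt_entry_mul (fun v => (G v)⁻¹ * A v) G u
      (fun a b => diffAt_entry_mul _ _ u (hBd u hu) (hAd u hu) a b) (hGd u hu) a b
  -- derivative of the inverse
  have hBeq : ∀ j : Fin n, ∀ u ∈ U, mpdv j (fun v => (G v)⁻¹) u = -((G u)⁻¹ * ω j u) := by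
    intro j u hu
    have hGu : G u * (G u)⁻¹ = 1 := Matrix.mul_nonsing_inv _ (hdet u hu)
    have h1 : mpdv j (fun v => (G v)⁻¹ * G v) u = 0 := by
      ext a b
      simp only [mpdv, Matrix.of_apply, Matrix.zero_apply]
      have he : (fun v => ((G v)⁻¹ * G v) a b)
          =ᶠ[nhds u] (fun _ => (1 : Matrix (Fin n) (Fin n) ℂ) a b) := by
        filter_upwards [hU.mem_nhds hu] with v hv
        rw [Matrix.nonsing_inv_mul _ (hdet v hv)]
      rw [he.fderiv_eq, fderiv_fun_const]
      simp
    have h2 := mpdv_mul j (fun v => (G v)⁻¹) G u (hBd u hu) (hGd u hu)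
    rw [h1, hGeq j u hu] at h2
    -- h2 : 0 = mpdv j (G⁻¹) u * G u + (G u)⁻¹ * (ω j u * G u)
    have hPG : mpdv j (fun v => (G v)⁻¹) u * G u = -((G u)⁻¹ * ω j u * G u) := by
      have h3 : mpdv j (fun v => (G v)⁻¹) u * G u + (G u)⁻¹ * ω j u * G u = 0 := by
        rw [mul_assoc]; exact h2.symm
      exact eq_neg_of_add_eq_zero_left h3
    calc mpdv j (fun v => (G v)⁻¹) u
        = mpdv j (fun v => (G v)⁻¹) u * G u * (G u)⁻¹ := by rw [mul_assoc, hGu, mul_one]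
      _ = -((G u)⁻¹ * ω j u * G u) * (G u)⁻¹ := by rw [hPG]
      _ = -((G u)⁻¹ * ω j u) := by rw [neg_mul, mul_assoc, hGu, mul_one]
  -- derivative of F vanishes
  have hkey : ∀ j : Fin n, ∀ u ∈ U, mpdv j F u = 0 := by
    intro j u hu
    have hBA := mpdv_mul j (fun v => (G v)⁻¹) A u (hBd u hu) (hAd u hu)
    have h5 := mpdv_mul j (fun v => (G v)⁻¹ * A v) G u
      (fun a b => diffAt_entry_mul _ _ u (hBd u hu) (hAd u hu) a b) (hGd u hu)
    rw [hBA, hGeq j u hu, hAeq j u hu, hBeq j u hu] at h5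
    have : mpdv j F u = mpdv j (fun v => (G v)⁻¹ * A v * G v) u := rfl
    rw [this, h5]
    noncomm_ring
  -- full Fréchet derivatives of the entries vanish
  have hfz : ∀ u ∈ U, ∀ a b, fderiv ℂ (fun v => F v a b) u = 0 := by
    intro u hu a b
    refine ContinuousLinearMap.ext fun v => ?_
    rw [ContinuousLinearMap.zero_apply]
    refine clm_zero_of_basis _ (fun j => ?_) v
    have h := congrFun (congrFun (hkey j u hu) a) b
    simpa [mpdv] using h
  -- local constancy
  have hloc : ∀ w ∈ U, ∃ ε > 0, Metric.ball w ε ⊆ U ∧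
      ∀ y ∈ Metric.ball w ε, F y = F w := by
    intro w hw
    obtain ⟨ε, hε, hball⟩ := Metric.isOpen_iff.mp hU w hw
    refine ⟨ε, hε, hball, fun y hy => ?_⟩
    ext a b
    exact (convex_ball w ε).is_const_of_fderivWithin_eq_zero
      (fun z hz => ((hFd z (hball hz) a b)).differentiableWithinAt)
      (fun z hz => by
        rw [fderivWithin_of_isOpen Metric.isOpen_ball hz]
        exact hfz z (hball hz) a b)
      hy (Metric.mem_ball_self hε)
  -- globalize by connectedness
  intro u hu v hv
  have hUS : U ⊆ {y | y ∈ U ∧ F y = F u} := by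
    have hS : IsOpen {y | y ∈ U ∧ F y = F u} := by
      rw [Metric.isOpen_iff]
      rintro y ⟨hyU, hyF⟩
      obtain ⟨ε, hε, hball, hconst⟩ := hloc y hyU
      exact ⟨ε, hε, fun z hz => ⟨hball hz, (hconst z hz).trans hyF⟩⟩
    have hT : IsOpen {y | y ∈ U ∧ F y ≠ F u} := by
      rw [Metric.isOpen_iff]
      rintro y ⟨hyU, hyF⟩
      obtain ⟨ε, hε, hball, hconst⟩ := hloc y hyU
      exact ⟨ε, hε, fun z hz => ⟨hball hz, by rw [hconst z hz]; exact hyF⟩⟩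
    refine hconn.subset_left_of_subset_union hS hT ?_ ?_ ⟨u, hu, hu, rfl⟩
    · exact Set.disjoint_left.mpr (fun y hy hy' => hy'.2 hy.2)
    · intro y hy
      by_cases h : F y = F u
      · exact Or.inl ⟨hy, h⟩
      · exact Or.inr ⟨hy, h⟩
  exact ((hUS hv).2).symm
end

section
/- Let U ⊆ ℂ^n be open with u_a ≠ u_b for every u ∈ U and all a ≠ b. Let A : U → M_n(ℂ) and ω_1^0,…,ω_n^0 : U → M_n(ℂ) be differentiable. Define ω_0(z,u) = Λ(u) + A(u)/z and ω_j(z,u) = zE_j + ω_j^0(u) for z ∈ ℂ∖{0}. Suppose that for all u ∈ U, all z ≠ 0, all j, and all k ≠ j: (a) ∂ω_0/∂u_j + ω_0 ω_j = ∂ω_j/∂z + ω_j ω_0, and (b) ∂ω_j/∂u_k + ω_j ω_k = ∂ω_k/∂u_j + ω_k ω_j. Then for all u ∈ U, all j, and all k ≠ j: (i) [Λ(u), ω_j^0(u)] = [E_j, A(u)]; (ii) ∂A/∂u_j = [ω_j^0, A]; (iii) ∂ω_j^0/∂u_k + ω_j^0 ω_k^0 = ∂ω_k^0/∂u_j + ω_k^0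 ω_j^0; (iv) [E_j, ω_k^0] = [E_k, ω_j^0]. -/
/-!
After the explicit `z`- and `u`-derivatives of `ω_0 = Λ + A/z` and `ω_j = zE_j + ω_j⁰` are
computed, each integrability condition (multiplied by `z` in the case of `(a)`) says that a
quadratic polynomial in `z` with matrix coefficients vanishes for every `z ≠ 0`. Its three
coefficients therefore vanish, and these are exactly the claimed identities; the top
coefficients, `[Λ, E_j]` and `[E_j, E_k]`, carry no information.
-/

open Matrix

section
variable {K M : Type*} [Field K] [CharZero K] [AddCommGroup M] [Module K M]

theorem eq_zero_of_forall_add_smul_add_sq_smul_eq_zero {P Q R : M}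
    (h : ∀ z : K, z ≠ 0 → P + z • Q + z ^ 2 • R = 0) : P = 0 ∧ Q = 0 ∧ R = 0 := by
  have h₁ := h 1 one_ne_zero
  have h₂ := h (-1) (by norm_num)
  have h₃ := h 2 two_ne_zero
  refine ⟨?_, ?_, ?_⟩
  · linear_combination (norm := module) h₁ + (3 : K)⁻¹ • h₂ - (3 : K)⁻¹ • h₃
  · linear_combination (norm := module) (2 : K)⁻¹ • h₁ - (2 : K)⁻¹ • h₂
  · linear_combination (norm := module) (6 : K)⁻¹ • h₂ - (2 : K)⁻¹ • h₁ + (3 : K)⁻¹ • h₃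
end

section
variable {K R : Type*} [Field K] [Ring R] [Algebra K R]

theorem frobenius_z_uj_quadratic_eq_zero {z : K} (hz : z ≠ 0) {L A E W D : R}
    (h : E + z⁻¹ • D + (L + z⁻¹ • A) * (z • E + W) = E + (z • E + W) * (L + z⁻¹ • A)) :
    (D + A * W - W * A) + z • (L * W + A * E - W * L - E * A) + z ^ 2 • (L * E - E * L) = 0 := by
  have h' := congrArg (z • ·) h
  simp only [smul_add, mul_add, add_mul, smul_mul_assoc, mul_smul_comm, smul_smul,
    mul_inv_cancel₀ hz, inv_mul_cancel₀ hz, one_smul] at h'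
  linear_combination (norm := module) h'

theorem frobenius_uj_uk_quadratic_eq_zero (z : K) {Ej Ek Wj Wk D D' : R}
    (h : D + (z • Ej + Wj) * (z • Ek + Wk) = D' + (z • Ek + Wk) * (z • Ej + Wj)) :
    (D + Wj * Wk - D' - Wk * Wj) + z • (Ej * Wk + Wj * Ek - Ek * Wj - Wk * Ej)
      + z ^ 2 • (Ej * Ek - Ek * Ej) = 0 := by
  simp only [mul_add, add_mul, smul_mul_assoc, mul_smul_comm] at h
  linear_combination (norm := module) h
end

section
variable {N n : ℕ}

theorem mpdv_const_add (k : Fin N) (C : Matrix (Fin n) (Fin n) ℂ)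
    (f : (Fin N → ℂ) → Matrix (Fin n) (Fin n) ℂ) (u : Fin N → ℂ) :
    mpdv k (fun v => C + f v) u = mpdv k f u := by
  ext a b
  simp only [mpdv, of_apply, Matrix.add_apply, fderiv_const_add]

theorem mpdv_const_smul (k : Fin N) (c : ℂ)
    (f : (Fin N → ℂ) → Matrix (Fin n) (Fin n) ℂ) (u : Fin N → ℂ) :
    mpdv k (fun v => c • f v) u = c • mpdv k f u := by
  ext a b
  change fderiv ℂ (c • fun v => f v a b) u _ = _
  rw [fderiv_const_smul_field]
  rfl

theorem mpdv_add (k : Fin N) {f g : (Fin N → ℂ) → Matrix (Fin n) (Fin n) ℂ}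
    {u : Fin N → ℂ} (hf : ∀ a b, DifferentiableAt ℂ (fun v => f v a b) u)
    (hg : ∀ a b, DifferentiableAt ℂ (fun v => g v a b) u) :
    mpdv k (fun v => f v + g v) u = mpdv k f u + mpdv k g u := by
  ext a b
  change fderiv ℂ (fun v => f v a b + g v a b) u _ = _
  rw [fderiv_fun_add (hf a b) (hg a b)]
  rfl

end

theorem differentiableAt_diagonal_apply {n : ℕ} (u : Fin n → ℂ) (a b : Fin n) :
    DifferentiableAt ℂ (fun v : Fin n → ℂ => diagonal v a b) u := by
  by_cases hab : a = b
  · subst hab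
    simp only [diagonal_apply_eq]
    fun_prop
  · simp [hab]

theorem mpdv_diagonal {n : ℕ} (j : Fin n) (u : Fin n → ℂ) :
    mpdv j diagonal u = single j j 1 := by
  ext a b
  by_cases hab : a = b
  · subst hab
    simp [mpdv, (hasFDerivAt_apply a u).fderiv, single, Pi.single_apply, eq_comm]
  · have : ¬(j = a ∧ j = b) := fun h => hab (h.1.symm.trans h.2)
    simp [mpdv, hab, single, this]

theorem matrix_of_deriv_smul_add_const {n : ℕ} (B M : Matrix (Fin n) (Fin n) ℂ) (z : ℂ) :
    (of fun a b => deriv (fun w : ℂ => (w • B + M) a b) z) = B := by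
  ext a b
  simp

theorem stmt5_general {n : ℕ} (U : Set (Fin n → ℂ)) (hU : IsOpen U)
    (A : (Fin n → ℂ) → Matrix (Fin n) (Fin n) ℂ)
    (ω0 : Fin n → (Fin n → ℂ) → Matrix (Fin n) (Fin n) ℂ)
    (hA : ∀ a b, DifferentiableOn ℂ (fun u => A u a b) U)
    (ha : ∀ u ∈ U, ∀ z : ℂ, z ≠ 0 → ∀ j : Fin n,
      mpdv j (fun v => Matrix.diagonal v + z⁻¹ • A v) u
          + (Matrix.diagonal u + z⁻¹ • A u)
            * (z • Matrix.single j j (1 : ℂ) + ω0 j u)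
        = (Matrix.of fun a b =>
            deriv (fun w : ℂ => (w • Matrix.single j j (1 : ℂ) + ω0 j u) a b) z)
          + (z • Matrix.single j j (1 : ℂ) + ω0 j u)
            * (Matrix.diagonal u + z⁻¹ • A u))
    (hb : ∀ u ∈ U, ∀ z : ℂ, z ≠ 0 → ∀ j k : Fin n, k ≠ j →
      mpdv k (fun v => z • Matrix.single j j (1 : ℂ) + ω0 j v) u
          + (z • Matrix.single j j (1 : ℂ) + ω0 j u)
            * (z • Matrix.single k k (1 : ℂ) + ω0 k u)
        = mpdv j (fun v => z • Matrix.single k k (1 : ℂ) + ω0 k v) u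
          + (z • Matrix.single k k (1 : ℂ) + ω0 k u)
            * (z • Matrix.single j j (1 : ℂ) + ω0 j u)) :
    ∀ u ∈ U,
      (∀ j : Fin n,
        (Matrix.diagonal u * ω0 j u - ω0 j u * Matrix.diagonal u
            = Matrix.single j j (1 : ℂ) * A u - A u * Matrix.single j j (1 : ℂ))
        ∧ mpdv j A u = ω0 j u * A u - A u * ω0 j u)
      ∧ (∀ j k : Fin n, k ≠ j →
          (mpdv k (ω0 j) u + ω0 j u * ω0 k u = mpdv j (ω0 k) u + ω0 k u * ω0 j u)
          ∧ (Matrix.single j j (1 : ℂ) * ω0 k u - ω0 k u * Matrix.single j j (1 : ℂ)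
              = Matrix.single k k (1 : ℂ) * ω0 j u
                - ω0 j u * Matrix.single k k (1 : ℂ))) := by
  intro u hu
  have hAu : ∀ a b, DifferentiableAt ℂ (fun v => A v a b) u :=
    fun a b => (hA a b).differentiableAt (hU.mem_nhds hu)
  refine ⟨fun j => ?_, fun j k hkj => ?_⟩
  · obtain ⟨hdA, hcomm, -⟩ := eq_zero_of_forall_add_smul_add_sq_smul_eq_zero fun z hz => by
      have h := ha u hu z hz j
      rw [mpdv_add j (g := fun v => z⁻¹ • A v) (differentiableAt_diagonal_apply u)
          (fun a b => (hAu a b).const_smul z⁻¹), mpdv_diagonal, mpdv_const_smul,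
        matrix_of_deriv_smul_add_const] at h
      exact frobenius_z_uj_quadratic_eq_zero hz h
    exact ⟨by linear_combination (norm := module) hcomm,
      by linear_combination (norm := module) hdA⟩
  · obtain ⟨hflat, hcomm, -⟩ := eq_zero_of_forall_add_smul_add_sq_smul_eq_zero fun z hz => by
      have h := hb u hu z hz j k hkj
      rw [mpdv_const_add, mpdv_const_add] at h
      exact frobenius_uj_uk_quadratic_eq_zero z h
    exact ⟨by linear_combination (norm := module) hflat,
      by linear_combination (norm := module) hcomm⟩

/-- One direction of Lemma B.2: the Frobenius integrability conditions of the Pfaffian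
system with `ω_0(z,u) = Λ(u) + A(u)/z` and `ω_j(z,u) = zE_j + ω_j⁰(u)` imply
(i) `[Λ, ω_j⁰] = [E_j, A]`, (ii) `∂A/∂u_j = [ω_j⁰, A]`,
(iii) the Frobenius condition for the `ω_j⁰`, and (iv) `[E_j, ω_k⁰] = [E_k, ω_j⁰]`. -/
theorem stmt5 {n : ℕ} (U : Set (Fin n → ℂ)) (hU : IsOpen U)
    (hdist : ∀ u ∈ U, ∀ a b : Fin n, a ≠ b → u a ≠ u b)
    (A : (Fin n → ℂ) → Matrix (Fin n) (Fin n) ℂ)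
    (ω0 : Fin n → (Fin n → ℂ) → Matrix (Fin n) (Fin n) ℂ)
    (hA : ∀ a b, DifferentiableOn ℂ (fun u => A u a b) U)
    (hω0 : ∀ (j : Fin n) (a b : Fin n), DifferentiableOn ℂ (fun u => ω0 j u a b) U)
    (ha : ∀ u ∈ U, ∀ z : ℂ, z ≠ 0 → ∀ j : Fin n,
      mpdv j (fun v => Matrix.diagonal v + z⁻¹ • A v) u
          + (Matrix.diagonal u + z⁻¹ • A u)
            * (z • Matrix.single j j (1 : ℂ) + ω0 j u)
        = (Matrix.of fun a b =>
            deriv (fun w : ℂ => (w • Matrix.single j j (1 : ℂ) + ω0 j u) a b) z)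
          + (z • Matrix.single j j (1 : ℂ) + ω0 j u)
            * (Matrix.diagonal u + z⁻¹ • A u))
    (hb : ∀ u ∈ U, ∀ z : ℂ, z ≠ 0 → ∀ j k : Fin n, k ≠ j →
      mpdv k (fun v => z • Matrix.single j j (1 : ℂ) + ω0 j v) u
          + (z • Matrix.single j j (1 : ℂ) + ω0 j u)
            * (z • Matrix.single k k (1 : ℂ) + ω0 k u)
        = mpdv j (fun v => z • Matrix.single k k (1 : ℂ) + ω0 k v) u
          + (z • Matrix.single k k (1 : ℂ) + ω0 k u)
            * (z • Matrix.single j j (1 : ℂ) + ω0 j u)) :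
    ∀ u ∈ U,
      (∀ j : Fin n,
        (Matrix.diagonal u * ω0 j u - ω0 j u * Matrix.diagonal u
            = Matrix.single j j (1 : ℂ) * A u - A u * Matrix.single j j (1 : ℂ))
        ∧ mpdv j A u = ω0 j u * A u - A u * ω0 j u)
      ∧ (∀ j k : Fin n, k ≠ j →
          (mpdv k (ω0 j) u + ω0 j u * ω0 k u = mpdv j (ω0 k) u + ω0 k u * ω0 j u)
          ∧ (Matrix.single j j (1 : ℂ) * ω0 k u - ω0 k u * Matrix.single j j (1 : ℂ)
              = Matrix.single k k (1 : ℂ) * ω0 j u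
                - ω0 j u * Matrix.single k k (1 : ℂ))) :=
  stmt5_general U hU A ω0 hA ha hb
end

section
/- Let u_1,…,u_n ∈ ℂ be pairwise distinct, A ∈ M_n(ℂ), j ∈ {1,…,n}, and let D ∈ M_n(ℂ) be any diagonal matrix. Define ω ∈ M_n(ℂ) by ω_{ab} = A_{ab}(δ_{aj} − δ_{bj})/(u_a − u_b) for a ≠ b and ω_{aa} = D_{aa}. Then every diagonal entry of the commutator [ω, A] vanishes: ([ω, A])_{kk} = 0 for all k. Consequently, if U ⊆ ℂ^n is open and connected, avoids all diagonals u_a = u_b, and A : U → M_n(ℂ) is differentiable with ∂A/∂u_j(u) = [ω_j(u), A(u)] for every j, where each ω_j(u) has the above form (with u-dependent diagonal), then every diagonal entry A_{kk} is constant on U. -/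
/-!
The `(k, k)` entry of `ω * A - A * ω` is `∑ a, A k a * A a k * (s k a - s a k)` when `ω` agrees
off the diagonal with the entrywise product of `A` and a matrix `s`. For the isomonodromic `ω_j`
this `s` is `(δ_{aj} - δ_{bj}) / (u_a - u_b)`, which is symmetric in `a, b`, so every partial
derivative of `A_{kk}` vanishes and `A_{kk}` is constant on the connected open set `U`.
-/

open Matrix

theorem Matrix.commutator_diag_eq_zero_of_offDiag_eq_mul_symm {ι R : Type*} [Fintype ι]
    [DecidableEq ι] [CommRing R] {ω B s : Matrix ι ι R} (hs : sᵀ = s)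
    (hω : ∀ a b, a ≠ b → ω a b = B a b * s a b) (k : ι) : (ω * B - B * ω) k k = 0 := by
  rw [sub_apply, mul_apply, mul_apply, ← Finset.sum_sub_distrib]
  refine Finset.sum_eq_zero fun a _ => ?_
  obtain rfl | hka := eq_or_ne k a
  · ring
  · rw [hω k a hka, hω a k hka.symm, ← transpose_apply s a k, hs]
    ring

section Isomonodromic

variable {ι K : Type*} [Fintype ι] [DecidableEq ι] [Field K]

/-- The matrix `ω_j` of the isomonodromic system at the point `v`, with diagonal `d`. -/
def isomonodromicMatrix (v : ι → K) (B : Matrix ι ι K) (d : ι → K) (j : ι) : Matrix ι ι K :=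
  of fun a b =>
    if a = b then d a
    else B a b * ((if a = j then 1 else 0) - (if b = j then 1 else 0)) / (v a - v b)

theorem isomonodromicMatrix_commutator_diag_eq_zero (v : ι → K) (B : Matrix ι ι K) (d : ι → K)
    (j k : ι) :
    (isomonodromicMatrix v B d j * B - B * isomonodromicMatrix v B d j) k k = 0 := by
  refine commutator_diag_eq_zero_of_offDiag_eq_mul_symm
    (s := of fun a b => ((if a = j then 1 else 0) - (if b = j then 1 else 0)) / (v a - v b))
    ?_ (fun a b hab => by simp [isomonodromicMatrix, hab, mul_div_assoc]) k
  ext a b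
  rw [transpose_apply, of_apply, of_apply, ← neg_div_neg_eq, neg_sub, neg_sub]

end Isomonodromic

theorem ContinuousLinearMap.eq_zero_of_apply_single_eq_zero {𝕜 ι F : Type*} [Fintype ι]
    [DecidableEq ι] [NontriviallyNormedField 𝕜] [NormedAddCommGroup F] [NormedSpace 𝕜 F]
    {L : (ι → 𝕜) →L[𝕜] F} (h : ∀ i, L (Pi.single i 1) = 0) : L = 0 :=
  coe_injective <| (Pi.basisFun 𝕜 ι).ext fun i => by simpa using h i

theorem stmt8_general {n : ℕ}
    (U : Set (Fin n → ℂ)) (hU : IsOpen U) (hconn : IsPreconnected U)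
    (A : (Fin n → ℂ) → Matrix (Fin n) (Fin n) ℂ)
    (hA : ∀ a b, DifferentiableOn ℂ (fun u => A u a b) U)
    (ωd : Fin n → (Fin n → ℂ) → Fin n → ℂ)
    (hLax : ∀ j : Fin n, ∀ u ∈ U,
      mpdv j A u =
        (Matrix.of fun a b =>
            if a = b then ωd j u a
            else A u a b * ((if a = j then 1 else 0) - (if b = j then 1 else 0))
              / (u a - u b)) * A u
        - A u * (Matrix.of fun a b =>
            if a = b then ωd j u a
            else A u a b * ((if a = j then 1 else 0) - (if b = j then 1 else 0))
              / (u a - u b))) :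
    (∀ v : Fin n → ℂ, (∀ a b : Fin n, a ≠ b → v a ≠ v b) →
      ∀ (B : Matrix (Fin n) (Fin n) ℂ) (d : Fin n → ℂ) (j k : Fin n),
        (((Matrix.of fun a b =>
              if a = b then d a
              else B a b * ((if a = j then 1 else 0) - (if b = j then 1 else 0))
                / (v a - v b)) * B
          - B * (Matrix.of fun a b =>
              if a = b then d a
              else B a b * ((if a = j then 1 else 0) - (if b = j then 1 else 0))
                / (v a - v b)))) k k = 0)
    ∧ (∀ k : Fin n, ∀ u ∈ U, ∀ w ∈ U, A u k k = A w k k) := by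
  refine ⟨fun v _ B d j k => isomonodromicMatrix_commutator_diag_eq_zero v B d j k,
    fun k u hu w hw => ?_⟩
  refine hU.is_const_of_fderiv_eq_zero hconn (hA k k) (fun x hx => ?_) hu hw
  refine ContinuousLinearMap.eq_zero_of_apply_single_eq_zero fun j => ?_
  have hpartial : mpdv j A x k k = _ := congrFun (congrFun (hLax j x hx) k) k
  exact hpartial.trans (isomonodromicMatrix_commutator_diag_eq_zero x (A x) (ωd j x) j k)

/-- Final assertion of Lemma B.2 / Proposition 2.6(D): if `ω` has off-diagonal entries
`A_{ab}(δ_{aj} − δ_{bj})/(u_a − u_b)` and arbitrary diagonal, then every diagonal entry of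
`[ω, A]` vanishes; consequently, for a differentiable `A : U → M_n(ℂ)` on an open
connected `U` avoiding all diagonals satisfying `∂A/∂u_j = [ω_j, A]` with each `ω_j` of
this form, every diagonal entry `A_{kk}` is constant on `U`. -/
theorem stmt8 {n : ℕ}
    (U : Set (Fin n → ℂ)) (hU : IsOpen U) (hconn : IsPreconnected U)
    (hdist : ∀ u ∈ U, ∀ a b : Fin n, a ≠ b → u a ≠ u b)
    (A : (Fin n → ℂ) → Matrix (Fin n) (Fin n) ℂ)
    (hA : ∀ a b, DifferentiableOn ℂ (fun u => A u a b) U)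
    (ωd : Fin n → (Fin n → ℂ) → Fin n → ℂ)
    (hLax : ∀ j : Fin n, ∀ u ∈ U,
      mpdv j A u =
        (Matrix.of fun a b =>
            if a = b then ωd j u a
            else A u a b * ((if a = j then 1 else 0) - (if b = j then 1 else 0))
              / (u a - u b)) * A u
        - A u * (Matrix.of fun a b =>
            if a = b then ωd j u a
            else A u a b * ((if a = j then 1 else 0) - (if b = j then 1 else 0))
              / (u a - u b))) :
    (∀ v : Fin n → ℂ, (∀ a b : Fin n, a ≠ b → v a ≠ v b) →
      ∀ (B : Matrix (Fin n) (Fin n) ℂ) (d : Fin n → ℂ) (j k : Fin n),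
        (((Matrix.of fun a b =>
              if a = b then d a
              else B a b * ((if a = j then 1 else 0) - (if b = j then 1 else 0))
                / (v a - v b)) * B
          - B * (Matrix.of fun a b =>
              if a = b then d a
              else B a b * ((if a = j then 1 else 0) - (if b = j then 1 else 0))
                / (v a - v b)))) k k = 0)
    ∧ (∀ k : Fin n, ∀ u ∈ U, ∀ w ∈ U, A u k k = A w k k) :=
  stmt8_general U hU hconn A hA ωd hLax
end

section
/- Let N ≥ 2, let U ⊆ ℂ^N be open and connected with u_i ≠ u_j for every u ∈ U and all i ≠ j, and let A_1,…,A_N : U → M_n(ℂ) be differentiable and satisfy the Schlesinger equations on U: ∂A_i/∂u_j = [A_j, A_i]/(u_j − u_i) for j ≠ i and ∂A_i/∂u_i = −Σ_{j≠i} [A_j, A_i]/(u_j − u_i). Then for every i ∈ {1,…,N} the characteristic polynomial of A_i(u) is the same for all u ∈ U; in particular the spectrum of each A_i(u) is independent of u, i.e., Schlesinger deformations are isospectral. -/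
open Matrix

namespace SchlesingerAux

/-- The determinant as a continuous multilinear map in the rows. -/
noncomputable def detCM (n : ℕ) : ContinuousMultilinearMap ℂ (fun _ : Fin n => (Fin n → ℂ)) ℂ where
  toMultilinearMap :=
    (Matrix.detRowAlternating : ((Fin n → ℂ) [⋀^Fin n]→ₗ[ℂ] ℂ)).toMultilinearMap
  cont := by
    have h : ((Matrix.detRowAlternating :
        ((Fin n → ℂ) [⋀^Fin n]→ₗ[ℂ] ℂ)).toMultilinearMap).toFun
        = fun m : Fin n → Fin n → ℂ =>
          ∑ σ : Equiv.Perm (Fin n), ((Equiv.Perm.sign σ : ℤ) : ℂ) * ∏ i, m (σ i) i := by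
      funext m
      exact Matrix.det_apply' (Matrix.of m)
    rw [h]
    exact continuous_finset_sum _ fun σ _ =>
      continuous_const.mul (continuous_finset_prod _ fun i _ =>
        (continuous_apply i).comp (continuous_apply (σ i)))

lemma detCM_apply {n : ℕ} (m : Fin n → Fin n → ℂ) :
    detCM n m = (Matrix.of m).det := rfl

/-- Sum of determinants with one row replaced equals a trace against the adjugate. -/
lemma sum_det_updateRow {n : ℕ} (B H : Matrix (Fin n) (Fin n) ℂ) :
    ∑ a, (B.updateRow a (H a)).det = (Matrix.adjugate B * H).trace := by
  have hrow : ∀ a : Fin n, (B.updateRow a (H a)).det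
      = ∑ k, H a k * Matrix.adjugate B k a := by
    intro a
    let L : (Fin n → ℂ) →ₗ[ℂ] ℂ :=
      { toFun := fun x => (B.updateRow a x).det
        map_add' := Matrix.det_updateRow_add B a
        map_smul' := Matrix.det_updateRow_smul B a }
    have hH : H a = ∑ k, H a k • (Pi.single k 1 : Fin n → ℂ) := by
      funext b
      simp [Pi.single_apply]
    have : (B.updateRow a (H a)).det = L (H a) := rfl
    rw [this]
    conv_lhs => rw [hH]
    rw [map_sum]
    refine Finset.sum_congr rfl fun k _ => ?_
    rw [_root_.map_smul]
    simp only [smul_eq_mul]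
    congr 1
    show (B.updateRow a (Pi.single k 1)).det = Matrix.adjugate B k a
    rw [Matrix.adjugate_apply]
  rw [Finset.sum_congr rfl fun a _ => hrow a]
  rw [Matrix.trace]
  simp only [Matrix.diag, Matrix.mul_apply]
  rw [Finset.sum_comm]
  exact Finset.sum_congr rfl fun a _ => Finset.sum_congr rfl fun k _ => mul_comm _ _

/-- The key algebraic fact: the trace of `adj(z•1 - M) * [X, M]` vanishes. -/
lemma trace_adj_comm {n : ℕ} (z : ℂ) (M X : Matrix (Fin n) (Fin n) ℂ) :
    (Matrix.adjugate (z • (1 : Matrix (Fin n) (Fin n) ℂ) - M) * (X * M - M * X)).trace = 0 := by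
  set B : Matrix (Fin n) (Fin n) ℂ := z • (1 : Matrix (Fin n) (Fin n) ℂ) - M with hB
  have h1 : X * M - M * X = B * X - X * B := by
    rw [hB]
    simp only [sub_mul, mul_sub, smul_mul_assoc, mul_smul_comm, one_mul, mul_one]
    abel
  have t1 : (Matrix.adjugate B * (B * X)).trace = B.det * X.trace := by
    rw [← mul_assoc, Matrix.adjugate_mul, smul_mul_assoc, one_mul, Matrix.trace_smul,
      smul_eq_mul]
  have t2 : (Matrix.adjugate B * (X * B)).trace = B.det * X.trace := by
    rw [← mul_assoc, Matrix.trace_mul_comm, ← mul_assoc, Matrix.mul_adjugate, smul_mul_assoc,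
      one_mul, Matrix.trace_smul, smul_eq_mul]
  rw [h1, mul_sub, Matrix.trace_sub, t1, t2, sub_self]

/-- Evaluation of the characteristic polynomial. -/
lemma charpoly_eval {n : ℕ} (M : Matrix (Fin n) (Fin n) ℂ) (z : ℂ) :
    M.charpoly.eval z = (z • (1 : Matrix (Fin n) (Fin n) ℂ) - M).det := by
  rw [Matrix.charpoly, _root_.eval_det, Matrix.matPolyEquiv_charmatrix]
  congr 1
  rw [Polynomial.eval_sub, Polynomial.eval_X, Polynomial.eval_C]
  congr 1
  rw [Matrix.scalar_apply, Matrix.smul_one_eq_diagonal]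

/-- Chain rule for the determinant of a matrix-valued function. -/
lemma hasFDerivAt_det {n N : ℕ} (B : (Fin N → ℂ) → Matrix (Fin n) (Fin n) ℂ)
    (x : Fin N → ℂ) (D : Fin n → Fin n → ((Fin N → ℂ) →L[ℂ] ℂ))
    (hD : ∀ a b, HasFDerivAt (fun w => B w a b) (D a b) x)
    (L : (Fin N → ℂ) →L[ℂ] ℂ)
    (hL : ∀ w, (Matrix.adjugate (B x) * Matrix.of fun a b => D a b w).trace = L w) :
    HasFDerivAt (fun w => (B w).det) L x := by
  have hrow : ∀ a : Fin n, HasFDerivAt (fun w => fun b => B w a b)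
      (ContinuousLinearMap.pi fun b => D a b) x :=
    fun a => hasFDerivAt_pi.2 fun b => hD a b
  have h := HasFDerivAt.multilinear_comp (detCM n) hrow
  have hLeq : L = ∑ a : Fin n,
      ((detCM n).toContinuousLinearMap (fun j => fun b => B x j b) a) ∘L
        (ContinuousLinearMap.pi fun b => D a b) := by
    ext w
    rw [← hL w, ← sum_det_updateRow (B x) (Matrix.of fun a b => D a b w)]
    rw [ContinuousLinearMap.sum_apply]
    refine (Finset.sum_congr rfl fun a _ => ?_).symm
    rw [ContinuousLinearMap.comp_apply, ContinuousMultilinearMap.toContinuousLinearMap_apply]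
    rfl
  rw [hLeq]
  exact h

end SchlesingerAux

open SchlesingerAux in
/-- Isospectrality of Schlesinger deformations (Proposition A.6): if `A_1,…,A_N` satisfy
the Schlesinger equations on an open connected `U`, then the characteristic polynomial
of each `A_i(u)` is independent of `u`. -/
theorem stmt13 {N n : ℕ} (hN : 2 ≤ N)
    (U : Set (Fin N → ℂ)) (hU : IsOpen U) (hconn : IsPreconnected U)
    (hdist : ∀ u ∈ U, ∀ i j : Fin N, i ≠ j → u i ≠ u j)
    (A : Fin N → (Fin N → ℂ) → Matrix (Fin n) (Fin n) ℂ)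
    (hA : ∀ (i : Fin N) (a b : Fin n), DifferentiableOn ℂ (fun u => A i u a b) U)
    (hSch1 : ∀ u ∈ U, ∀ i j : Fin N, j ≠ i →
      mpdv j (A i) u = (u j - u i)⁻¹ • (A j u * A i u - A i u * A j u))
    (hSch2 : ∀ u ∈ U, ∀ i : Fin N,
      mpdv i (A i) u
        = -∑ j ∈ Finset.univ.erase i,
            (u j - u i)⁻¹ • (A j u * A i u - A i u * A j u)) :
    ∀ i : Fin N, ∀ u ∈ U, ∀ v ∈ U, (A i u).charpoly = (A i v).charpoly := by
  intro i u hu v hv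
  apply Polynomial.funext
  intro z
  rw [charpoly_eval, charpoly_eval]
  set g : (Fin N → ℂ) → ℂ := fun x => (z • (1 : Matrix (Fin n) (Fin n) ℂ) - A i x).det with hgdef
  show g u = g v
  -- Step 1: the derivative of `g` vanishes on `U`.
  have key : ∀ x ∈ U, HasFDerivAt g (0 : (Fin N → ℂ) →L[ℂ] ℂ) x := by
    intro x hx
    set D : Fin n → Fin n → ((Fin N → ℂ) →L[ℂ] ℂ) :=
      fun a b => fderiv ℂ (fun w => A i w a b) x with hDdef
    have hD : ∀ a b, HasFDerivAt (fun w => A i w a b) (D a b) x := fun a b =>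
      ((hA i a b).differentiableAt (hU.mem_nhds hx)).hasFDerivAt
    set B : Matrix (Fin n) (Fin n) ℂ := z • (1 : Matrix (Fin n) (Fin n) ℂ) - A i x with hBdef
    -- entrywise derivatives of `w ↦ z•1 - A i w`
    have hD' : ∀ a b, HasFDerivAt
        (fun w => (z • (1 : Matrix (Fin n) (Fin n) ℂ) - A i w) a b) (-(D a b)) x := by
      intro a b
      have := (hD a b).const_sub ((z • (1 : Matrix (Fin n) (Fin n) ℂ)) a b)
      have heq : (fun w => (z • (1 : Matrix (Fin n) (Fin n) ℂ)) a b - A i w a b)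
          = fun w => (z • (1 : Matrix (Fin n) (Fin n) ℂ) - A i w) a b := by
        funext w; simp [Matrix.sub_apply]
      rwa [heq] at this
    -- directional derivatives in terms of `mpdv`
    have hDw : ∀ (a b : Fin n) (w : Fin N → ℂ),
        D a b w = ∑ j, w j * mpdv j (A i) x a b := by
      intro a b w
      have hw : w = ∑ j, w j • (Pi.single j 1 : Fin N → ℂ) := by
        funext b'
        simp [Pi.single_apply]
      conv_lhs => rw [hw]
      rw [map_sum]
      refine Finset.sum_congr rfl fun j _ => ?_
      rw [_root_.map_smul, smul_eq_mul]
      rfl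
    -- the trace of adjugate against each `mpdv` vanishes
    have htr : ∀ j : Fin N, (Matrix.adjugate B * mpdv j (A i) x).trace = 0 := by
      intro j
      by_cases hj : j = i
      · subst hj
        rw [hSch2 x hx j, mul_neg, Matrix.mul_sum, Matrix.trace_neg, Matrix.trace_sum]
        have hz : ∀ k ∈ Finset.univ.erase j,
            (Matrix.adjugate B * ((x k - x j)⁻¹ • (A k x * A j x - A j x * A k x))).trace = 0 := by
          intro k _
          rw [Matrix.mul_smul, Matrix.trace_smul, hBdef, trace_adj_comm z (A j x) (A k x)]
          simp
        rw [Finset.sum_congr rfl hz]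
        simp
      · rw [hSch1 x hx i j hj, Matrix.mul_smul, Matrix.trace_smul, hBdef,
          trace_adj_comm z (A i x) (A j x)]
        simp
    -- apply the chain rule for determinants
    refine hasFDerivAt_det (fun w => z • (1 : Matrix (Fin n) (Fin n) ℂ) - A i w) x
      (fun a b => -(D a b)) hD' 0 ?_
    intro w
    have hmat : (Matrix.of fun a b => (-(D a b)) w)
        = -∑ j, w j • mpdv j (A i) x := by
      ext a b
      simp only [Matrix.of_apply, ContinuousLinearMap.neg_apply, Matrix.neg_apply,
        Matrix.sum_apply, Matrix.smul_apply, smul_eq_mul]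
      rw [hDw a b w]
    rw [hmat]
    rw [mul_neg, Matrix.mul_sum, Matrix.trace_neg, Matrix.trace_sum]
    have : ∀ j : Fin N, (Matrix.adjugate B * (w j • mpdv j (A i) x)).trace = 0 := by
      intro j
      rw [Matrix.mul_smul, Matrix.trace_smul, htr j]
      simp
    rw [Finset.sum_congr rfl fun j _ => this j]
    simp
  -- Step 2: `g` is locally constant on `U`.
  have loc : ∀ x ∈ U, ∀ᶠ y in nhds x, g y = g x := by
    intro x hx
    rcases Metric.isOpen_iff.1 hU x hx with ⟨ε, hε, hball⟩
    have hco : ∀ y ∈ Metric.ball x ε, g y = g x := by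
      intro y hy
      exact (convex_ball x ε).is_const_of_fderivWithin_eq_zero
        (fun p hp => ((key p (hball hp)).differentiableAt).differentiableWithinAt)
        (fun p hp => by
          rw [fderivWithin_of_isOpen Metric.isOpen_ball hp]
          exact (key p (hball hp)).fderiv)
        hy (Metric.mem_ball_self hε)
    filter_upwards [Metric.ball_mem_nhds x hε] with y hy using hco y hy
  -- Step 3: a locally constant function on a preconnected set is constant.
  have main : ∀ x ∈ U, ∀ y ∈ U, g x = g y := by
    intro x hx y hy
    set S : Set (Fin N → ℂ) := {p | p ∈ U ∧ g p = g x} with hSdef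
    set T : Set (Fin N → ℂ) := {p | p ∈ U ∧ g p ≠ g x} with hTdef
    have hSopen : IsOpen S := by
      rw [isOpen_iff_mem_nhds]
      rintro p ⟨hpU, hpg⟩
      filter_upwards [loc p hpU, hU.mem_nhds hpU] with q hq1 hq2
      exact ⟨hq2, hq1.trans hpg⟩
    have hTopen : IsOpen T := by
      rw [isOpen_iff_mem_nhds]
      rintro p ⟨hpU, hpg⟩
      filter_upwards [loc p hpU, hU.mem_nhds hpU] with q hq1 hq2
      exact ⟨hq2, by rw [hq1]; exact hpg⟩
    have hsub : U ⊆ S := by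
      refine hconn.subset_left_of_subset_union hSopen hTopen ?_ ?_ ⟨x, hx, hx, rfl⟩
      · exact Set.disjoint_left.2 fun p hp hp' => hp'.2 hp.2
      · intro p hp
        by_cases h : g p = g x
        · exact Or.inl ⟨hp, h⟩
        · exact Or.inr ⟨hp, h⟩
    exact ((hsub hy).2).symm
  exact main u hu v hv
end

section
/- Let N ≥ 2, let U ⊆ ℂ^N be open with u_i ≠ u_j for every u ∈ U and all i ≠ j, and let A_1,…,A_N, γ_1,…,γ_N : U → M_n(ℂ) be differentiable. Define, for z ∉ {u_1,…,u_N}, ω^{(0)}(z,u) = Σ_i A_i(u)/(z − u_i) and ω̂^{(j)}(z,u) = −A_j(u)/(z − u_j) + γ_j(u). Assume the Schlesinger equations hold for A_1,…,A_N (equivalently, the form ω_s is Frobenius integrable) and that the full componentwise Frobenius conditions hold for the augmented system, i.e., for all u, all z ∉ {u_1,…,u_N}, all j, and all k ≠ j: ∂ω^{(0)}/∂u_j + ω^{(0)}ω̂^{(j)} = ∂ω̂^{(j)}/∂z + ω̂^{(j)}ω^{(0)} and ∂ω̂^{(j)}/∂u_k + ω̂^{(j)}ω̂^{(k)} = ∂ω̂^{(k)}/∂u_j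 + ω̂^{(k)}ω̂^{(j)}. Then the γ_i satisfy ∂γ_i/∂u_j + γ_i γ_j = ∂γ_j/∂u_i + γ_j γ_i on U for all i ≠ j. -/
open Matrix

open Filter Topology

lemma inv_sub_tendsto (c : ℂ) :
    Tendsto (fun t : ℝ => ((t : ℂ) - c)⁻¹) atTop (nhds 0) := by
  apply tendsto_inv₀_cobounded.comp
  rw [← tendsto_norm_atTop_iff_cobounded]
  apply tendsto_atTop_mono (fun t => ?_)
    (tendsto_atTop_add_const_right atTop (-‖c‖) tendsto_id)
  have h1 : t - ‖c‖ ≤ ‖(t:ℂ)‖ - ‖c‖ := by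
    simp only [Complex.norm_real, Real.norm_eq_abs]
    have := le_abs_self t; linarith
  have h2 := norm_sub_norm_le ((t:ℂ)) c
  simp only [id_eq]
  linarith

lemma ev_ne {N : ℕ} (u : Fin N → ℂ) : ∀ᶠ t : ℝ in atTop, ∀ m, (t:ℂ) ≠ u m := by
  rw [eventually_all]
  intro m
  filter_upwards [eventually_gt_atTop ‖u m‖] with t ht
  intro h
  rw [← h] at ht
  simp [Real.norm_eq_abs] at ht
  have := le_abs_self t
  linarith

lemma mpdv_omega {N n : ℕ} {U : Set (Fin N → ℂ)} (hU : IsOpen U) {u : Fin N → ℂ} (hu : u ∈ U)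
    (A γ : (Fin N → ℂ) → Matrix (Fin n) (Fin n) ℂ)
    (hA : ∀ a b, DifferentiableOn ℂ (fun v => A v a b) U)
    (hγ : ∀ a b, DifferentiableOn ℂ (fun v => γ v a b) U)
    {j k : Fin N} (hkj : k ≠ j) {z : ℂ} (hz : z ≠ u j) :
    mpdv k (fun v => -(z - v j)⁻¹ • A v + γ v) u
      = -(z - u j)⁻¹ • mpdv k A u + mpdv k γ u := by
  ext a b
  have hAa : HasFDerivAt (fun v => A v a b) (fderiv ℂ (fun v => A v a b) u) u :=
    ((hA a b).differentiableAt (hU.mem_nhds hu)).hasFDerivAt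
  have hγa : HasFDerivAt (fun v => γ v a b) (fderiv ℂ (fun v => γ v a b) u) u :=
    ((hγ a b).differentiableAt (hU.mem_nhds hu)).hasFDerivAt
  have hproj := hasFDerivAt_apply (𝕜 := ℂ) j u
  have hsub : HasFDerivAt (fun v : Fin N → ℂ => z - v j)
      ((0 : (Fin N → ℂ) →L[ℂ] ℂ) - ContinuousLinearMap.proj j) u :=
    (hasFDerivAt_const z u).sub hproj
  have hz0 : z - u j ≠ 0 := sub_ne_zero.2 hz
  have hinv : HasFDerivAt (fun v : Fin N → ℂ => (z - v j)⁻¹)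
      ((-ContinuousLinearMap.mulLeftRight ℂ ℂ (z - u j)⁻¹ (z - u j)⁻¹).comp
        ((0 : (Fin N → ℂ) →L[ℂ] ℂ) - ContinuousLinearMap.proj j)) u :=
    (hasFDerivAt_inv' hz0).comp u hsub
  have hfull := (hinv.neg.mul hAa).add hγa
  have heq : (fun v => (-(z - v j)⁻¹ • A v + γ v) a b)
      = fun v => -(z - v j)⁻¹ * A v a b + γ v a b := rfl
  show fderiv ℂ (fun v => (-(z - v j)⁻¹ • A v + γ v) a b) u (Pi.single k 1) = _
  rw [heq, HasFDerivAt.fderiv (f := fun v => -(z - v j)⁻¹ * A v a b + γ v a b) hfull]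
  have hsingle := Pi.single_eq_of_ne (M := fun _ : Fin N => ℂ) (Ne.symm hkj) 1
  simp [ContinuousLinearMap.add_apply, ContinuousLinearMap.smul_apply,
    ContinuousLinearMap.comp_apply, ContinuousLinearMap.sub_apply,
    ContinuousLinearMap.proj_apply, hsingle, mpdv, smul_eq_mul]

/-- Identity (A.4): if the Schlesinger equations hold and the augmented 1-form with
`ω̂ʲ(z,u) = −A_j(u)/(z − u_j) + γ_j(u)` satisfies the full componentwise Frobenius
conditions, then `∂γ_i/∂u_j + γ_i γ_j = ∂γ_j/∂u_i + γ_j γ_i` for all `i ≠ j`. -/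
theorem stmt14 {N n : ℕ} (hN : 2 ≤ N)
    (U : Set (Fin N → ℂ)) (hU : IsOpen U)
    (hdist : ∀ u ∈ U, ∀ i j : Fin N, i ≠ j → u i ≠ u j)
    (A γ : Fin N → (Fin N → ℂ) → Matrix (Fin n) (Fin n) ℂ)
    (hA : ∀ (i : Fin N) (a b : Fin n), DifferentiableOn ℂ (fun u => A i u a b) U)
    (hγ : ∀ (i : Fin N) (a b : Fin n), DifferentiableOn ℂ (fun u => γ i u a b) U)
    (hSch1 : ∀ u ∈ U, ∀ i j : Fin N, j ≠ i →
      mpdv j (A i) u = (u j - u i)⁻¹ • (A j u * A i u - A i u * A j u))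
    (hSch2 : ∀ u ∈ U, ∀ i : Fin N,
      mpdv i (A i) u
        = -∑ j ∈ Finset.univ.erase i,
            (u j - u i)⁻¹ • (A j u * A i u - A i u * A j u))
    (hFrob1 : ∀ u ∈ U, ∀ z : ℂ, (∀ i : Fin N, z ≠ u i) → ∀ j : Fin N,
      mpdv j (fun v => ∑ i, (z - v i)⁻¹ • A i v) u
          + (∑ i, (z - u i)⁻¹ • A i u) * (-(z - u j)⁻¹ • A j u + γ j u)
        = (Matrix.of fun a b =>
            deriv (fun w : ℂ => (-(w - u j)⁻¹ • A j u + γ j u) a b) z)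
          + (-(z - u j)⁻¹ • A j u + γ j u) * (∑ i, (z - u i)⁻¹ • A i u))
    (hFrob2 : ∀ u ∈ U, ∀ z : ℂ, (∀ i : Fin N, z ≠ u i) → ∀ j k : Fin N, k ≠ j →
      mpdv k (fun v => -(z - v j)⁻¹ • A j v + γ j v) u
          + (-(z - u j)⁻¹ • A j u + γ j u) * (-(z - u k)⁻¹ • A k u + γ k u)
        = mpdv j (fun v => -(z - v k)⁻¹ • A k v + γ k v) u
          + (-(z - u k)⁻¹ • A k u + γ k u) * (-(z - u j)⁻¹ • A j u + γ j u)) :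
    ∀ u ∈ U, ∀ i j : Fin N, i ≠ j →
      mpdv j (γ i) u + γ i u * γ j u = mpdv i (γ j) u + γ j u * γ i u := by
  intro u hu i j hij
  set g : ℝ → Matrix (Fin n) (Fin n) ℂ := fun t =>
    (-((t:ℂ) - u j)⁻¹ • mpdv i (A j) u + mpdv i (γ j) u
      + (-((t:ℂ) - u j)⁻¹ • A j u + γ j u) * (-((t:ℂ) - u i)⁻¹ • A i u + γ i u))
      - (-((t:ℂ) - u i)⁻¹ • mpdv j (A i) u)
      - (-((t:ℂ) - u i)⁻¹ • A i u + γ i u) * (-((t:ℂ) - u j)⁻¹ • A j u + γ j u)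
    with hg
  have hev : ∀ᶠ t : ℝ in atTop, g t = mpdv j (γ i) u := by
    filter_upwards [ev_ne u] with t ht
    have H := hFrob2 u hu t ht i j hij.symm
    rw [mpdv_omega hU hu (A i) (γ i) (hA i) (hγ i) hij.symm (ht i),
        mpdv_omega hU hu (A j) (γ j) (hA j) (hγ j) hij (ht j)] at H
    have h0 : g t - mpdv j (γ i) u =
        (-((t:ℂ) - u j)⁻¹ • mpdv i (A j) u + mpdv i (γ j) u
          + (-((t:ℂ) - u j)⁻¹ • A j u + γ j u) * (-((t:ℂ) - u i)⁻¹ • A i u + γ i u))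
        - (-((t:ℂ) - u i)⁻¹ • mpdv j (A i) u + mpdv j (γ i) u
          + (-((t:ℂ) - u i)⁻¹ • A i u + γ i u) * (-((t:ℂ) - u j)⁻¹ • A j u + γ j u)) := by
      rw [hg]; beta_reduce; abel
    rw [← H, sub_self] at h0
    exact sub_eq_zero.mp h0
  have hγi : Tendsto (fun t : ℝ => -((t:ℂ) - u i)⁻¹ • A i u + γ i u) atTop (nhds (γ i u)) := by
    simpa using (((inv_sub_tendsto (u i)).neg).smul_const (A i u)).add
      (tendsto_const_nhds (x := γ i u))
  have hγj : Tendsto (fun t : ℝ => -((t:ℂ) - u j)⁻¹ • A j u + γ j u) atTop (nhds (γ j u)) := by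
    simpa using (((inv_sub_tendsto (u j)).neg).smul_const (A j u)).add
      (tendsto_const_nhds (x := γ j u))
  have hBjt : Tendsto (fun t : ℝ => -((t:ℂ) - u j)⁻¹ • mpdv i (A j) u) atTop (nhds 0) := by
    simpa using ((inv_sub_tendsto (u j)).neg).smul_const (mpdv i (A j) u)
  have hBit : Tendsto (fun t : ℝ => -((t:ℂ) - u i)⁻¹ • mpdv j (A i) u) atTop (nhds 0) := by
    simpa using ((inv_sub_tendsto (u i)).neg).smul_const (mpdv j (A i) u)
  have key : Tendsto g atTop
      (nhds (((0 + mpdv i (γ j) u + γ j u * γ i u) - 0) - γ i u * γ j u)) :=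
    (((hBjt.add (tendsto_const_nhds (x := mpdv i (γ j) u))).add (hγj.mul hγi)).sub hBit).sub
      (hγi.mul hγj)
  have hPQ : mpdv j (γ i) u = ((0 + mpdv i (γ j) u + γ j u * γ i u) - 0) - γ i u * γ j u :=
    tendsto_nhds_unique (Tendsto.congr' (hev.mono fun t ht => ht.symm) tendsto_const_nhds) key
  rw [hPQ]; abel
end

section
/- Let D ⊆ ℂ^n be an open polydisc and let A : D → M_n(ℂ) be analytic such that for all a ≠ b there is an analytic function g_{ab} : D → ℂ with A_{ab}(u) = (u_a − u_b) g_{ab}(u) on D (the vanishing condition at the coalescence locus). Define F_1 : D → M_n(ℂ) by (F_1)_{ab} = −g_{ab} for a ≠ b and (F_1)_{aa} = −Σ_{b≠a} A_{ab}(F_1)_{ba}, and recursively, for l ≥ 1, define F_{l+1} : D → M_n(ℂ) by (F_{l+1})_{ab} = ([F_1, E_b] F_l − ∂F_l/∂u_b)_{ab} for a ≠ b and (F_{l+1})_{aa} = −(1/l) Σ_{b≠a} A_{ab}(F_l)_{ba}. Then every F_l, l ≥ 1, is analytic on the whole polydisc D, including the coalescence locus {u ∈ D : u_a = u_b for some a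 ≠ b}. -/
open Matrix

/-- Applying an analytic family of derivatives to a fixed vector is analytic. -/
lemma fderiv_apply_analyticOnNhd {N : ℕ} {f : (Fin N → ℂ) → ℂ} {D : Set (Fin N → ℂ)}
    (hf : AnalyticOnNhd ℂ f D) (v : Fin N → ℂ) :
    AnalyticOnNhd ℂ (fun u => fderiv ℂ f u v) D :=
  ((ContinuousLinearMap.apply ℂ ℂ v).analyticOnNhd Set.univ).comp hf.fderiv
    (Set.mapsTo_univ _ _)

/-- Proposition 3.6: assume the vanishing conditions `A_{ab}(u) = (u_a − u_b)·g_{ab}(u)`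
with `g_{ab}` analytic on an open polydisc `D`, and define `F_1` by `(F_1)_{ab} = −g_{ab}`
(`a ≠ b`), `(F_1)_{aa} = −Σ_{b≠a} A_{ab}(F_1)_{ba}`, and recursively
`(F_{l+1})_{ab} = ([F_1,E_b]F_l − ∂F_l/∂u_b)_{ab}` (`a ≠ b`),
`(F_{l+1})_{aa} = −(1/l)Σ_{b≠a} A_{ab}(F_l)_{ba}`. Then every `F_l` is analytic on the
whole polydisc `D`, including the coalescence locus. -/
theorem stmt17 {n : ℕ} (c : Fin n → ℂ) (r : Fin n → ℝ) (hr : ∀ k, 0 < r k)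
    (D : Set (Fin n → ℂ))
    (hD : D = {u : Fin n → ℂ | ∀ k, u k ∈ Metric.ball (c k) (r k)})
    (A : (Fin n → ℂ) → Matrix (Fin n) (Fin n) ℂ)
    (g : Fin n → Fin n → (Fin n → ℂ) → ℂ)
    (F : ℕ → (Fin n → ℂ) → Matrix (Fin n) (Fin n) ℂ)
    (hA : ∀ a b : Fin n, AnalyticOnNhd ℂ (fun u => A u a b) D)
    (hg : ∀ a b : Fin n, a ≠ b → AnalyticOnNhd ℂ (g a b) D)
    (hAg : ∀ a b : Fin n, a ≠ b → ∀ u ∈ D, A u a b = (u a - u b) * g a b u)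
    (hF1off : ∀ a b : Fin n, a ≠ b → ∀ u ∈ D, F 1 u a b = -g a b u)
    (hF1diag : ∀ a : Fin n, ∀ u ∈ D,
      F 1 u a a = -∑ b ∈ Finset.univ.erase a, A u a b * F 1 u b a)
    (hFrecOff : ∀ l : ℕ, 1 ≤ l → ∀ a b : Fin n, a ≠ b → ∀ u ∈ D,
      F (l + 1) u a b =
        ((F 1 u * Matrix.single b b (1 : ℂ)
            - Matrix.single b b (1 : ℂ) * F 1 u) * F l u
          - mpdv b (F l) u) a b)
    (hFrecDiag : ∀ l : ℕ, 1 ≤ l → ∀ a : Fin n, ∀ u ∈ D,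
      F (l + 1) u a a
        = -(1 / (l : ℂ)) * ∑ b ∈ Finset.univ.erase a, A u a b * F l u b a) :
    ∀ l : ℕ, 1 ≤ l → ∀ a b : Fin n, AnalyticOnNhd ℂ (fun u => F l u a b) D := by
  -- `D` is open
  have hDopen : IsOpen D := by
    have : D = ⋂ k, (fun u : Fin n → ℂ => u k) ⁻¹' Metric.ball (c k) (r k) := by
      rw [hD]; ext u; simp
    rw [this]
    exact isOpen_iInter_of_finite fun k =>
      Metric.isOpen_ball.preimage (continuous_apply k)
  -- analyticity of `F 1` entries
  have hF1 : ∀ a b : Fin n, AnalyticOnNhd ℂ (fun u => F 1 u a b) D := by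
    have hoff : ∀ a b : Fin n, a ≠ b → AnalyticOnNhd ℂ (fun u => F 1 u a b) D := by
      intro a b hab
      exact ((hg a b hab).neg).congr hDopen fun u hu => (hF1off a b hab u hu).symm
    intro a b
    rcases eq_or_ne a b with rfl | hab
    · have hsum : AnalyticOnNhd ℂ
          (fun u => -∑ b ∈ Finset.univ.erase a, A u a b * F 1 u b a) D := by
        refine AnalyticOnNhd.neg ?_
        refine Finset.analyticOnNhd_fun_sum _ fun b hb => ?_
        have hba : b ≠ a := Finset.ne_of_mem_erase hb
        exact (hA a b).mul (hoff b a hba)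
      exact hsum.congr hDopen fun u hu => (hF1diag a u hu).symm
    · exact hoff a b hab
  -- main induction
  intro l hl
  induction l, hl using Nat.le_induction with
  | base => exact hF1
  | succ l hl IH =>
    intro a b
    rcases eq_or_ne a b with rfl | hab
    · -- diagonal entry
      have hsum : AnalyticOnNhd ℂ
          (fun u => -(1 / (l : ℂ)) * ∑ b ∈ Finset.univ.erase a, A u a b * F l u b a) D := by
        refine AnalyticOnNhd.mul analyticOnNhd_const ?_
        refine Finset.analyticOnNhd_fun_sum _ fun b _ => (hA a b).mul (IH b a)
      exact hsum.congr hDopen fun u hu => (hFrecDiag l hl a u hu).symm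
    · -- off-diagonal entry
      have hexpr : AnalyticOnNhd ℂ
          (fun u => ((F 1 u * Matrix.single b b (1 : ℂ)
              - Matrix.single b b (1 : ℂ) * F 1 u) * F l u
            - mpdv b (F l) u) a b) D := by
        have : (fun u => ((F 1 u * Matrix.single b b (1 : ℂ)
              - Matrix.single b b (1 : ℂ) * F 1 u) * F l u
            - mpdv b (F l) u) a b)
            = fun u =>
              (∑ k, ((∑ j, F 1 u a j * Matrix.single b b (1 : ℂ) j k)
                  - ∑ j, Matrix.single b b (1 : ℂ) a j * F 1 u j k) * F l u k b)
                - fderiv ℂ (fun v => F l v a b) u (Pi.single b 1) := by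
          funext u
          simp [Matrix.sub_apply, Matrix.mul_apply, mpdv]
        rw [this]
        refine AnalyticOnNhd.sub ?_ (fderiv_apply_analyticOnNhd (IH a b) _)
        refine Finset.analyticOnNhd_fun_sum _ fun k _ => ?_
        refine AnalyticOnNhd.mul (AnalyticOnNhd.sub ?_ ?_) (IH k b)
        · refine Finset.analyticOnNhd_fun_sum _ fun j _ => ?_
          exact (hF1 a j).mul analyticOnNhd_const
        · refine Finset.analyticOnNhd_fun_sum _ fun j _ => ?_
          exact analyticOnNhd_const.mul (hF1 j k)
      exact hexpr.congr hDopen fun u hu => (hFrecOff l hl a b hab u hu).symm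
end
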